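/- arXiv:2211.08212 — 6 statements merged into one kernel-verified Lean document; each statement's English description precedes it below -/
import Mathlib

section
/- Let H be a symmetric n×n real matrix, g a nonzero vector in ℝ^n, and δ ≥ 0. Consider the (n+1)×(n+1) symmetric block matrix F = [[H, g], [gᵀ, -δ]]. Then the smallest eigenvalue of F is strictly less than -δ. -/
open Matrix

/-- The homogenized matrix `F = [[H, g], [gᵀ, -δ]]`. -/
noncomputable def homog {n : ℕ} (H : Matrix (Fin n) (Fin n) ℝ) (g : Fin n → ℝ) (δ : ℝ) :
    Matrix (Fin (n + 1)) (Fin (n + 1)) ℝ :=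
  Matrix.of fun i j =>
    if hi : (i : ℕ) < n then
      if hj : (j : ℕ) < n then H ⟨i, hi⟩ ⟨j, hj⟩ else g ⟨i, hi⟩
    else if hj : (j : ℕ) < n then g ⟨j, hj⟩ else -δ

/-! Test `F` against `v = (t • g, 1)`: then `vᵀ (F + δ I) v = t² (gᵀ H g + δ ‖g‖²) + 2 t ‖g‖²`, which is
negative for a suitable `t` because `g ≠ 0`. So `F + δ I` is not positive semidefinite, i.e. some
eigenvalue of `F` is below `-δ`. -/

namespace Matrix

variable {m : Type*} [Fintype m] [DecidableEq m] {A : Matrix m m ℝ}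

theorem IsHermitian.posSemidef_sub_smul_one (hA : A.IsHermitian) {c : ℝ}
    (h : ∀ i, c ≤ hA.eigenvalues i) : (A - c • 1).PosSemidef := by
  rw [← Algebra.algebraMap_eq_smul_one, posSemidef_iff_isHermitian_and_spectrum_nonneg,
    ← spectrum.sub_singleton_eq, hA.spectrum_real_eq_range_eigenvalues]
  refine ⟨hA.sub (IsSelfAdjoint.algebraMap _ (.all c)), ?_⟩
  rintro _ ⟨_, ⟨i, rfl⟩, _, rfl, rfl⟩
  exact sub_nonneg.mpr (h i)

theorem IsHermitian.iInf_eigenvalues_lt_of_dotProduct_mulVec_lt (hA : A.IsHermitian) {c : ℝ}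
    (x : m → ℝ) (hx : x ⬝ᵥ A *ᵥ x < c * (x ⬝ᵥ x)) : ⨅ i, hA.eigenvalues i < c := by
  by_contra! hc
  have hpsd := hA.posSemidef_sub_smul_one fun i ↦
    hc.trans (ciInf_le (Set.finite_range _).bddBelow i)
  have := hpsd.dotProduct_mulVec_nonneg x
  simp only [sub_mulVec, smul_mulVec, one_mulVec, dotProduct_sub, dotProduct_smul, star_trivial,
    smul_eq_mul] at this
  linarith

end Matrix

theorem Fin.snoc_dotProduct_snoc {R : Type*} [NonUnitalNonAssocSemiring R] {n : ℕ}
    (x y : Fin n → R) (a b : R) :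
    (Fin.snoc x a : Fin (n + 1) → R) ⬝ᵥ Fin.snoc y b = x ⬝ᵥ y + a * b := by
  simp [dotProduct, Fin.sum_univ_castSucc]

theorem homog_mulVec_snoc {n : ℕ} (H : Matrix (Fin n) (Fin n) ℝ) (g : Fin n → ℝ) (δ : ℝ)
    (x : Fin n → ℝ) (s : ℝ) :
    homog H g δ *ᵥ Fin.snoc x s = Fin.snoc (H *ᵥ x + s • g) (g ⬝ᵥ x - δ * s) := by
  ext i
  refine Fin.lastCases ?_ (fun i ↦ ?_) i
  · simp [mulVec, dotProduct, Fin.sum_univ_castSucc, homog, sub_eq_add_neg]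
  · simp [mulVec, dotProduct, Fin.sum_univ_castSucc, homog, mul_comm]

theorem exists_mul_sq_add_mul_neg (a : ℝ) {b : ℝ} (hb : 0 < b) : ∃ t, a * t ^ 2 + b * t < 0 := by
  rcases le_or_gt a 0 with ha | ha
  · exact ⟨-1, by linarith⟩
  · refine ⟨-b / (2 * a), ?_⟩
    field_simp
    nlinarith [mul_pos hb hb]

theorem homog_lambdaMin_lt_neg_delta_general {n : ℕ}
    (H : Matrix (Fin n) (Fin n) ℝ)
    (g : Fin n → ℝ) (hg : g ≠ 0) (δ : ℝ)
    (hF : (homog H g δ).IsHermitian) :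
    (⨅ i, hF.eigenvalues i) < -δ := by
  have hgg : 0 < g ⬝ᵥ g := by simpa using dotProduct_star_self_pos_iff.mpr hg
  obtain ⟨t, ht⟩ :=
    exists_mul_sq_add_mul_neg (g ⬝ᵥ H *ᵥ g + δ * (g ⬝ᵥ g)) (by positivity : 0 < 2 * (g ⬝ᵥ g))
  refine hF.iInf_eigenvalues_lt_of_dotProduct_mulVec_lt (Fin.snoc (t • g) 1) ?_
  simp only [homog_mulVec_snoc, Fin.snoc_dotProduct_snoc, mulVec_smul, dotProduct_add,
    dotProduct_smul, smul_dotProduct, smul_eq_mul]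
  linear_combination ht

/-- The smallest eigenvalue of the homogenized matrix is strictly less than `-δ`. -/
theorem homog_lambdaMin_lt_neg_delta {n : ℕ}
    (H : Matrix (Fin n) (Fin n) ℝ) (hH : H.IsHermitian)
    (g : Fin n → ℝ) (hg : g ≠ 0) (δ : ℝ) (hδ : 0 ≤ δ)
    (hF : (homog H g δ).IsHermitian) :
    (⨅ i, hF.eigenvalues i) < -δ :=
  homog_lambdaMin_lt_neg_delta_general H g hg δ hF
end

section
/- Let H be a symmetric n×n real matrix, g ∈ ℝ^n with g ≠ 0, δ ≥ 0, and F = [[H, g], [gᵀ, -δ]]. If [v; t] is a unit eigenvector of F corresponding to its smallest eigenvalue, then v ≠ 0. -/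
open Matrix

/-- If `g ≠ 0` and `[v; t]` is a unit eigenvector of `F` for its smallest
eigenvalue, then `v ≠ 0`. -/
theorem homog_eigvec_v_ne_zero {n : ℕ}
    (H : Matrix (Fin n) (Fin n) ℝ) (hH : H.IsHermitian)
    (g : Fin n → ℝ) (hg : g ≠ 0) (δ : ℝ) (hδ : 0 ≤ δ)
    (hF : (homog H g δ).IsHermitian)
    (v : Fin n → ℝ) (t : ℝ)
    (hunit : Fin.snoc v t ⬝ᵥ Fin.snoc v t = 1)
    (heig : homog H g δ *ᵥ Fin.snoc v t = (⨅ i, hF.eigenvalues i) • (Fin.snoc v t : Fin (n + 1) → ℝ)) :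
    v ≠ 0 := by
  intro hv
  subst hv
  have ht2 : t * t = 1 := by
    simpa [dotProduct, Fin.sum_univ_castSucc] using hunit
  have ht : t ≠ 0 := by
    intro ht0
    rw [ht0] at ht2
    simp at ht2
  apply hg
  funext k
  have hk := congrFun heig (Fin.castSucc k)
  simp [mulVec, dotProduct, Fin.sum_univ_castSucc, homog, Fin.is_lt] at hk
  rcases hk with h | h
  · exact h
  · exact absurd h ht
end

section
/- Let f have M-Lipschitz continuous Hessian, with ∇²f(x_k) ⪯ U_H·I, g_k = ∇f(x_k) ≠ 0, and δ ≥ 0. Suppose [v; t] is a unit eigenvector of F = [[∇²f(x_k), g_k], [g_kᵀ, -δ]] for its smallest eigenvalue -θ with θ > δ and t ≠ 0, and d = v/t satisfies ‖d‖ ≤ Δ ≤ √2/2. Then with x_{k+1} = x_k + d, we have ‖∇f(x_{k+1})‖ ≤ 2(U_H + δ)Δ³ + (M/2)Δ² + δΔ. -/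
/-!
Dividing the eigen-equations by `t` gives `(H + θ) d = -g` and `⟪g, d⟫ = δ - θ` for `H = ∇²f(x_k)`,
`g = ∇f(x_k)`, and minimality of `-θ` makes the symmetric operator `H + θ` positive semidefinite.
Cauchy–Schwarz for its form, applied to `d` and `g`, gives `‖g‖² ≤ (U_H + θ)(θ - δ)`, while
`θ - δ = -⟪g, d⟫ ≤ Δ‖g‖`; as `Δ² ≤ 1/2` this forces `‖g‖ ≤ 2(U_H + δ)Δ`. Finally
`∇f(x_k + d) = (∇f(x_k + d) - g - H d) - θ d`, a Taylor remainder of norm at most `M/2 ‖d‖²` plus a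
term of norm `θ‖d‖ ≤ (δ + Δ‖g‖)Δ`.
-/

theorem norm_image_add_sub_sub_fderiv_le {E F : Type*} [NormedAddCommGroup E] [NormedSpace ℝ E]
    [NormedAddCommGroup F] [NormedSpace ℝ F] {g : E → F} {g' : E → E →L[ℝ] F} {M : ℝ} {x : E}
    (hg : ∀ y, HasFDerivAt g (g' y) y) (hlip : ∀ y, ‖g' y - g' x‖ ≤ M * ‖y - x‖) (d : E) :
    ‖g (x + d) - g x - g' x d‖ ≤ M / 2 * ‖d‖ ^ 2 := by
  have hderiv : ∀ s : ℝ, HasDerivAt (fun s : ℝ => g (x + s • d) - g x - s • g' x d)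
      (g' (x + s • d) d - g' x d) s := fun s => by
    have hline : HasDerivAt (fun s : ℝ => x + s • d) d s := by
      simpa using ((hasDerivAt_id s).smul_const d).const_add x
    have hcomp : HasDerivAt (fun s : ℝ => g (x + s • d)) (g' (x + s • d) d) s :=
      (hg _).comp_hasDerivAt s hline
    simpa using (hcomp.sub_const (g x)).fun_sub ((hasDerivAt_id' s).smul_const (g' x d))
  have hbound : ∀ s ∈ Set.Ico (0 : ℝ) 1, ‖g' (x + s • d) d - g' x d‖ ≤ M * s * ‖d‖ ^ 2 := by
    intro s hs
    calc ‖g' (x + s • d) d - g' x d‖ = ‖(g' (x + s • d) - g' x) d‖ := rfl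
      _ ≤ ‖g' (x + s • d) - g' x‖ * ‖d‖ := ContinuousLinearMap.le_opNorm _ _
      _ ≤ M * ‖s • d‖ * ‖d‖ := by gcongr; simpa using hlip (x + s • d)
      _ = M * s * ‖d‖ ^ 2 := by rw [norm_smul, Real.norm_of_nonneg hs.1]; ring
  have := image_norm_le_of_norm_deriv_right_le_deriv_boundary
    (fun s _ => (hderiv s).continuousAt.continuousWithinAt)
    (fun s _ => (hderiv s).hasDerivWithinAt) (B := fun s => M / 2 * s ^ 2 * ‖d‖ ^ 2)
    (by simp) (fun s => (((hasDerivAt_pow 2 s).const_mul (M / 2)).mul_const (‖d‖ ^ 2)).congr_deriv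
      (by push_cast; ring))
    hbound (Set.right_mem_Icc.2 zero_le_one)
  simpa using this

theorem norm_image_add_le_of_fderiv_add_eq_smul {E : Type*} [NormedAddCommGroup E]
    [NormedSpace ℝ E] {g : E → E} {g' : E → E →L[ℝ] E} {M : ℝ} {x : E}
    (hg : ∀ y, HasFDerivAt g (g' y) y)
    (hlip : ∀ y, ‖g' y - g' x‖ ≤ M * ‖y - x‖) {d : E} {c : ℝ} (hstep : g' x d + g x = c • d) :
    ‖g (x + d)‖ ≤ M / 2 * ‖d‖ ^ 2 + ‖c‖ * ‖d‖ :=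
  calc ‖g (x + d)‖ = ‖(g (x + d) - g x - g' x d) + c • d‖ := by rw [← hstep]; abel_nf
    _ ≤ ‖g (x + d) - g x - g' x d‖ + ‖c • d‖ := norm_add_le _ _
    _ ≤ M / 2 * ‖d‖ ^ 2 + ‖c‖ * ‖d‖ := by
      rw [norm_smul]; gcongr; exact norm_image_add_sub_sub_fderiv_le hg hlip d

theorem LinearMap.IsPositive.real_inner_map_sq_le {E : Type*} [NormedAddCommGroup E]
    [InnerProductSpace ℝ E] {T : E →ₗ[ℝ] E} (hT : T.IsPositive) (x y : E) :
    inner ℝ (T x) y ^ 2 ≤ inner ℝ (T x) x * inner ℝ (T y) y := by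
  have hquad : ∀ l : ℝ, 0 ≤ inner ℝ (T y) y * (l * l) + 2 * inner ℝ (T x) y * l
      + inner ℝ (T x) x := fun l => by
    have := hT.inner_nonneg_left (x + l • y)
    simp only [map_add, map_smul, inner_add_left, inner_add_right, real_inner_smul_left,
      real_inner_smul_right, hT.isSymmetric y x, real_inner_comm (T x) y] at this
    linarith
  have := discrim_le_zero hquad
  rw [discrim] at this
  linarith

theorem LinearMap.IsPositive.norm_sq_map_le {E : Type*} [NormedAddCommGroup E]
    [InnerProductSpace ℝ E] {T : E →ₗ[ℝ] E} (hT : T.IsPositive) {c : ℝ} (x : E)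
    (hc : inner ℝ (T (T x)) (T x) ≤ c * ‖T x‖ ^ 2) :
    ‖T x‖ ^ 2 ≤ c * inner ℝ (T x) x := by
  rcases eq_or_ne (T x) 0 with hTx | hTx
  · simp [hTx]
  have hCS : (‖T x‖ ^ 2) ^ 2 ≤ inner ℝ (T x) x * (c * ‖T x‖ ^ 2) := by
    rw [← real_inner_self_eq_norm_sq]
    exact (hT.real_inner_map_sq_le x (T x)).trans
      (mul_le_mul_of_nonneg_left (by rwa [real_inner_self_eq_norm_sq]) (hT.inner_nonneg_left x))
  have : 0 < ‖T x‖ ^ 2 := by positivity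
  nlinarith

theorem isSymmetric_of_hasGradientAt_of_hasFDerivAt {E : Type*} [NormedAddCommGroup E]
    [InnerProductSpace ℝ E] [CompleteSpace E] {f : E → ℝ} {g : E → E} {H : E →L[ℝ] E} {x : E}
    (hf : ∀ y, HasGradientAt f (g y) y) (hg : HasFDerivAt g H x) :
    (H : E →ₗ[ℝ] E).IsSymmetric := fun u w => by
  have hf' : ∀ y, HasFDerivAt f (innerSL ℝ (g y)) y := fun y => (hf y).hasFDerivAt
  calc inner ℝ (H u) w = innerSL ℝ (H u) w := rfl
    _ = innerSL ℝ (H w) u := second_derivative_symmetric hf' ((innerSL ℝ).hasFDerivAt.comp x hg) u w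
    _ = inner ℝ u (H w) := real_inner_comm _ _

theorem le_two_mul_of_sq_le_of_gap_le {a U θ δ Δ : ℝ} (ha : 0 ≤ a)
    (hsq : a ^ 2 ≤ (U + θ) * (θ - δ)) (hgap_pos : 0 < θ - δ) (hgap : θ - δ ≤ Δ * a)
    (hΔ : Δ ^ 2 ≤ 1 / 2) : a ≤ 2 * (U + δ) * Δ := by
  have hΔ_pos : 0 < Δ := pos_of_mul_pos_left (hgap_pos.trans_le hgap) ha
  have ha_pos : 0 < a := pos_of_mul_pos_right (hgap_pos.trans_le hgap) hΔ_pos.le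
  have hUθ : 0 ≤ U + θ := nonneg_of_mul_nonneg_left ((sq_nonneg a).trans hsq) hgap_pos
  have ha_le : a ≤ (U + θ) * Δ := by
    refine le_of_mul_le_mul_right ?_ ha_pos
    calc a * a = a ^ 2 := (sq a).symm
      _ ≤ (U + θ) * (θ - δ) := hsq
      _ ≤ (U + θ) * (Δ * a) := by gcongr
      _ = (U + θ) * Δ * a := by ring
  have : a ≤ (U + δ) * Δ + a / 2 :=
    calc a ≤ (U + θ) * Δ := ha_le
      _ = (U + δ) * Δ + (θ - δ) * Δ := by ring
      _ ≤ (U + δ) * Δ + Δ ^ 2 * a := by nlinarith [mul_le_mul_of_nonneg_right hgap hΔ_pos.le]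
      _ ≤ (U + δ) * Δ + a / 2 := by nlinarith [mul_le_mul_of_nonneg_right hΔ ha]
  linarith

theorem norm_le_two_mul_of_add_eq_neg_smul {E : Type*} [NormedAddCommGroup E]
    [InnerProductSpace ℝ E] {H : E →L[ℝ] E} (hH : (H : E →ₗ[ℝ] E).IsSymmetric)
    {g d : E} {U δ θ Δ : ℝ} (hpsd : ∀ w, -θ * ‖w‖ ^ 2 ≤ inner ℝ (H w) w)
    (hU : ∀ w, inner ℝ (H w) w ≤ U * ‖w‖ ^ 2) (hstep : H d + g = (-θ) • d)
    (hgd : inner ℝ g d = δ - θ) (hθ : δ < θ) (hgap : θ - δ ≤ Δ * ‖g‖) (hΔ : Δ ^ 2 ≤ 1 / 2) :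
    ‖g‖ ≤ 2 * (U + δ) * Δ := by
  set T := H.toLinearMap + θ • LinearMap.id
  have hT_apply : ∀ w, T w = H w + θ • w := fun w => rfl
  have hT : T.IsPositive := by
    refine T.isPositive_iff.2 ⟨hH.add (LinearMap.IsSymmetric.id.smul rfl), fun w => ?_⟩
    rw [hT_apply, inner_add_left, real_inner_smul_left, real_inner_self_eq_norm_sq]
    linarith [hpsd w]
  have hTd : T d = -g := by rw [hT_apply, eq_neg_iff_add_eq_zero, add_right_comm, hstep]; simp
  have hg_sq : ‖g‖ ^ 2 ≤ (U + θ) * (θ - δ) := by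
    have := hT.norm_sq_map_le (c := U + θ) d (by
      rw [hTd, map_neg, hT_apply, inner_neg_neg, inner_add_left, real_inner_smul_left,
        real_inner_self_eq_norm_sq, norm_neg]
      linarith [hU g])
    rwa [hTd, norm_neg, inner_neg_left, hgd, neg_sub] at this
  exact le_two_mul_of_sq_le_of_gap_le (norm_nonneg g) hg_sq (by linarith) hgap hΔ

theorem homogenized_eigen_inv_smul {E : Type*} [NormedAddCommGroup E] [InnerProductSpace ℝ E]
    {H : E →L[ℝ] E} {g v : E} {t θ δ : ℝ} (ht : t ≠ 0) (heig1 : H v + t • g = (-θ) • v)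
    (heig2 : inner ℝ g v - δ * t = -θ * t) :
    H (t⁻¹ • v) + g = (-θ) • (t⁻¹ • v) ∧ inner ℝ g (t⁻¹ • v) = δ - θ := by
  constructor
  · rw [map_smul, ← inv_smul_smul₀ ht g, ← smul_add, heig1, smul_comm]
  · rw [real_inner_smul_right, ← mul_left_inj' ht, mul_right_comm, inv_mul_cancel₀ ht, one_mul]
    linarith

theorem next_iterate_gradient_bound_general {n : ℕ}
    (f : EuclideanSpace ℝ (Fin n) → ℝ)
    (gf : EuclideanSpace ℝ (Fin n) → EuclideanSpace ℝ (Fin n))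
    (Hf : EuclideanSpace ℝ (Fin n) → EuclideanSpace ℝ (Fin n) →L[ℝ] EuclideanSpace ℝ (Fin n))
    (M U_H δ θ Δ : ℝ)
    (hgrad : ∀ x, HasGradientAt f (gf x) x)
    (hhess : ∀ x, HasFDerivAt gf (Hf x) x)
    (hlip : ∀ x y, ‖Hf x - Hf y‖ ≤ M * ‖x - y‖)
    (xk : EuclideanSpace ℝ (Fin n))
    (hUH : ∀ w, (inner ℝ (Hf xk w) w : ℝ) ≤ U_H * ‖w‖ ^ 2)
    (hδ : 0 ≤ δ) (hθ : δ < θ)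
    (v : EuclideanSpace ℝ (Fin n)) (t : ℝ) (ht : t ≠ 0)
    -- eigenvector equation for the homogenized matrix, eigenvalue `-θ`
    (heig1 : Hf xk v + t • gf xk = (-θ) • v)
    (heig2 : (inner ℝ (gf xk) v : ℝ) - δ * t = -θ * t)
    -- `-θ` is the smallest eigenvalue: Rayleigh quotient lower bound
    (hmin : ∀ (w : EuclideanSpace ℝ (Fin n)) (s : ℝ),
      (-θ) * (‖w‖ ^ 2 + s ^ 2) ≤
        (inner ℝ (Hf xk w) w : ℝ) + 2 * s * (inner ℝ (gf xk) w : ℝ) - δ * s ^ 2)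
    (hd : ‖t⁻¹ • v‖ ≤ Δ) (hΔ : Δ ≤ Real.sqrt 2 / 2) :
    ‖gf (xk + t⁻¹ • v)‖ ≤ 2 * (U_H + δ) * Δ ^ 3 + M / 2 * Δ ^ 2 + δ * Δ := by
  set g := gf xk
  set H := Hf xk
  obtain ⟨hstep, hgd⟩ := homogenized_eigen_inv_smul ht heig1 heig2
  set d := t⁻¹ • v
  have hgap : θ - δ ≤ Δ * ‖g‖ :=
    calc θ - δ = -inner ℝ g d := by rw [hgd, neg_sub]
      _ ≤ ‖g‖ * ‖d‖ := (neg_le_abs _).trans (abs_real_inner_le_norm g d)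
      _ ≤ Δ * ‖g‖ := by rw [mul_comm]; gcongr
  have hΔ_nonneg : 0 ≤ Δ := (norm_nonneg d).trans hd
  have hΔ_sq : Δ ^ 2 ≤ 1 / 2 :=
    calc Δ ^ 2 ≤ (Real.sqrt 2 / 2) ^ 2 := by gcongr
      _ = 1 / 2 := by rw [div_pow, Real.sq_sqrt zero_le_two]; norm_num
  have hH := isSymmetric_of_hasGradientAt_of_hasFDerivAt hgrad (hhess xk)
  have hg_le : ‖g‖ ≤ 2 * (U_H + δ) * Δ :=
    norm_le_two_mul_of_add_eq_neg_smul hH (fun w => by simpa using hmin w 0) hUH hstep hgd hθ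
      hgap hΔ_sq
  have hM : 0 ≤ M := by
    have hd_pos : 0 < ‖d‖ := norm_pos_iff.2 fun hd0 => by
      rw [hd0, inner_zero_right] at hgd; linarith
    have := (norm_nonneg _).trans (hlip (xk + d) xk)
    rw [add_sub_cancel_left] at this
    exact nonneg_of_mul_nonneg_left this hd_pos
  have hθ_le : θ ≤ δ + Δ * (2 * (U_H + δ) * Δ) := by
    linarith [mul_le_mul_of_nonneg_left hg_le hΔ_nonneg]
  calc ‖gf (xk + d)‖ ≤ M / 2 * ‖d‖ ^ 2 + ‖-θ‖ * ‖d‖ :=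
        norm_image_add_le_of_fderiv_add_eq_smul hhess (fun y => hlip y xk) hstep
    _ ≤ M / 2 * Δ ^ 2 + (δ + Δ * (2 * (U_H + δ) * Δ)) * Δ := by
      rw [norm_neg, Real.norm_of_nonneg (by linarith)]
      gcongr
      linarith
    _ = 2 * (U_H + δ) * Δ ^ 3 + M / 2 * Δ ^ 2 + δ * Δ := by ring

/-- Small-step case: the gradient at the next iterate `x_{k+1} = x_k + d` is small. -/
theorem next_iterate_gradient_bound {n : ℕ}
    (f : EuclideanSpace ℝ (Fin n) → ℝ)
    (gf : EuclideanSpace ℝ (Fin n) → EuclideanSpace ℝ (Fin n))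
    (Hf : EuclideanSpace ℝ (Fin n) → EuclideanSpace ℝ (Fin n) →L[ℝ] EuclideanSpace ℝ (Fin n))
    (M U_H δ θ Δ : ℝ)
    (hgrad : ∀ x, HasGradientAt f (gf x) x)
    (hhess : ∀ x, HasFDerivAt gf (Hf x) x)
    (hlip : ∀ x y, ‖Hf x - Hf y‖ ≤ M * ‖x - y‖)
    (xk : EuclideanSpace ℝ (Fin n))
    (hUH : ∀ w, (inner ℝ (Hf xk w) w : ℝ) ≤ U_H * ‖w‖ ^ 2)
    (hgk : gf xk ≠ 0) (hδ : 0 ≤ δ) (hθ : δ < θ)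
    (v : EuclideanSpace ℝ (Fin n)) (t : ℝ) (ht : t ≠ 0)
    (hunit : ‖v‖ ^ 2 + t ^ 2 = 1)
    -- eigenvector equation for the homogenized matrix, eigenvalue `-θ`
    (heig1 : Hf xk v + t • gf xk = (-θ) • v)
    (heig2 : (inner ℝ (gf xk) v : ℝ) - δ * t = -θ * t)
    -- `-θ` is the smallest eigenvalue: Rayleigh quotient lower bound
    (hmin : ∀ (w : EuclideanSpace ℝ (Fin n)) (s : ℝ),
      (-θ) * (‖w‖ ^ 2 + s ^ 2) ≤
        (inner ℝ (Hf xk w) w : ℝ) + 2 * s * (inner ℝ (gf xk) w : ℝ) - δ * s ^ 2)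
    (hd : ‖t⁻¹ • v‖ ≤ Δ) (hΔ : Δ ≤ Real.sqrt 2 / 2) :
    ‖gf (xk + t⁻¹ • v)‖ ≤ 2 * (U_H + δ) * Δ ^ 3 + M / 2 * Δ ^ 2 + δ * Δ :=
  next_iterate_gradient_bound_general f gf Hf M U_H δ θ Δ hgrad hhess hlip xk hUH hδ hθ v t ht heig1
    heig2 hmin hd hΔ
end

section
/- Under the same hypotheses as the small-step gradient bound (‖d‖ ≤ Δ ≤ √2/2, M-Lipschitz Hessian, ∇²f(x_k) ⪯ U_H·I), with x_{k+1} = x_k + d, the Hessian at the next iterate satisfies ∇²f(x_{k+1}) ⪰ -(2(U_H+δ)Δ² + MΔ + δ)·I. -/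
/-! The second-order optimality condition of the eigenproblem gives `∇²f(x_k) + θ I ⪰ 0`, so it
suffices to bound `θ`. Pairing the eigen-equation with `v` gives
`⟪∇²f(x_k) v, v⟫ = (θ - δ) t² - θ ‖v‖²`, and with `∇²f(x_k) ⪯ U_H I` and `‖v‖ = |t| ‖d‖ ≤ |t| Δ`
this yields `(θ - δ)(1 - Δ²) ≤ (U_H + δ) Δ²`; since `Δ² ≤ 1/2`, `θ - δ ≤ 2 (U_H + δ) Δ²`.
The Lipschitz Hessian moves the quadratic form by at most `M ‖d‖ ‖w‖² ≤ M Δ ‖w‖²` from `x_k`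
to `x_k + d`. -/

open RealInnerProductSpace

section
variable {E : Type*} [NormedAddCommGroup E] [InnerProductSpace ℝ E]

theorem ContinuousLinearMap.inner_apply_self_sub_le_of_norm_sub_le {A B : E →L[ℝ] E} {c : ℝ}
    (h : ‖A - B‖ ≤ c) (w : E) : ⟪B w, w⟫ - c * ‖w‖ ^ 2 ≤ ⟪A w, w⟫ := by
  have hbound : ⟪(B - A) w, w⟫ ≤ c * ‖w‖ ^ 2 :=
    calc ⟪(B - A) w, w⟫ ≤ ‖(B - A) w‖ * ‖w‖ := real_inner_le_norm _ _
      _ ≤ ‖B - A‖ * ‖w‖ * ‖w‖ := by gcongr; exact (B - A).le_opNorm w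
      _ ≤ c * ‖w‖ ^ 2 := by rw [norm_sub_rev]; nlinarith [norm_nonneg w]
  rw [sub_apply, inner_sub_left] at hbound
  linarith

variable {H : E →L[ℝ] E} {g v : E} {t θ δ : ℝ}

theorem inner_apply_self_of_eigenpair (heig1 : H v + t • g = (-θ) • v)
    (heig2 : ⟪g, v⟫ - δ * t = -θ * t) : ⟪H v, v⟫ = (θ - δ) * t ^ 2 - θ * ‖v‖ ^ 2 := by
  have hpair : ⟪H v + t • g, v⟫ = ⟪(-θ) • v, v⟫ := by rw [heig1]
  rw [inner_add_left, real_inner_smul_left, real_inner_smul_left,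
    real_inner_self_eq_norm_sq] at hpair
  linear_combination hpair - t * heig2

theorem eigenvalue_le_of_step_le {U Δ : ℝ} (hU : ⟪H v, v⟫ ≤ U * ‖v‖ ^ 2)
    (heig1 : H v + t • g = (-θ) • v) (heig2 : ⟪g, v⟫ - δ * t = -θ * t)
    (hθ : δ < θ) (ht : t ≠ 0) (hd : ‖t⁻¹ • v‖ ≤ Δ) (hΔ : Δ ^ 2 ≤ 1 / 2) :
    θ ≤ δ + 2 * (U + δ) * Δ ^ 2 := by
  have hshift : (θ - δ) * t ^ 2 ≤ (U + θ) * ‖v‖ ^ 2 := by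
    rw [inner_apply_self_of_eigenpair heig1 heig2] at hU
    linarith
  have ht2 : 0 < t ^ 2 := by positivity
  have hUθ : 0 < U + θ := by
    have : 0 < (U + θ) * ‖v‖ ^ 2 := lt_of_lt_of_le (by nlinarith) hshift
    exact pos_of_mul_pos_left this (by positivity)
  have hv : ‖v‖ ^ 2 ≤ Δ ^ 2 * t ^ 2 := by
    have hv_eq : ‖v‖ = |t| * ‖t⁻¹ • v‖ := by
      rw [norm_smul, norm_inv, Real.norm_eq_abs, ← mul_assoc, mul_inv_cancel₀ (abs_ne_zero.mpr ht),
        one_mul]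
    rw [hv_eq, mul_pow, sq_abs, mul_comm]
    gcongr
  have hstep : θ - δ ≤ (U + θ) * Δ ^ 2 := by
    refine le_of_mul_le_mul_right ?_ ht2
    calc (θ - δ) * t ^ 2 ≤ (U + θ) * ‖v‖ ^ 2 := hshift
      _ ≤ (U + θ) * (Δ ^ 2 * t ^ 2) := by gcongr
      _ = (U + θ) * Δ ^ 2 * t ^ 2 := by ring
  nlinarith

theorem eigvec_ne_zero (heig2 : ⟪g, v⟫ - δ * t = -θ * t) (hθ : δ < θ) (ht : t ≠ 0) : v ≠ 0 := by
  rintro rfl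
  rw [inner_zero_right] at heig2
  exact hθ.ne (mul_right_cancel₀ ht (by linarith))

end

theorem nonneg_of_norm_sub_le_mul_norm {X Y : Type*} [NormedAddCommGroup X]
    [SeminormedAddCommGroup Y] {F : X → Y} {M : ℝ} {x y : X}
    (hlip : ‖F x - F y‖ ≤ M * ‖x - y‖) (hxy : x ≠ y) : 0 ≤ M :=
  nonneg_of_mul_nonneg_left ((norm_nonneg _).trans hlip) (norm_pos_iff.mpr (sub_ne_zero.mpr hxy))

theorem next_iterate_hessian_bound_general {n : ℕ}
    (gf : EuclideanSpace ℝ (Fin n) → EuclideanSpace ℝ (Fin n))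
    (Hf : EuclideanSpace ℝ (Fin n) → EuclideanSpace ℝ (Fin n) →L[ℝ] EuclideanSpace ℝ (Fin n))
    (M U_H δ θ Δ : ℝ)
    (hlip : ∀ x y, ‖Hf x - Hf y‖ ≤ M * ‖x - y‖)
    (xk : EuclideanSpace ℝ (Fin n))
    (hUH : ∀ w, (inner ℝ (Hf xk w) w : ℝ) ≤ U_H * ‖w‖ ^ 2)
    (hθ : δ < θ)
    (v : EuclideanSpace ℝ (Fin n)) (t : ℝ) (ht : t ≠ 0)
    (heig1 : Hf xk v + t • gf xk = (-θ) • v)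
    (heig2 : (inner ℝ (gf xk) v : ℝ) - δ * t = -θ * t)
    (hmin : ∀ (w : EuclideanSpace ℝ (Fin n)) (s : ℝ),
      (-θ) * (‖w‖ ^ 2 + s ^ 2) ≤
        (inner ℝ (Hf xk w) w : ℝ) + 2 * s * (inner ℝ (gf xk) w : ℝ) - δ * s ^ 2)
    (hd : ‖t⁻¹ • v‖ ≤ Δ) (hΔ : Δ ≤ Real.sqrt 2 / 2) :
    ∀ w : EuclideanSpace ℝ (Fin n),
      -(2 * (U_H + δ) * Δ ^ 2 + M * Δ + δ) * ‖w‖ ^ 2 ≤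
        (inner ℝ (Hf (xk + t⁻¹ • v) w) w : ℝ) := by
  intro w
  have hΔ2 : Δ ^ 2 ≤ 1 / 2 := by
    have h2 : (Real.sqrt 2 / 2) ^ 2 = 1 / 2 := by
      rw [div_pow, Real.sq_sqrt zero_le_two]; norm_num
    exact h2 ▸ pow_le_pow_left₀ ((norm_nonneg _).trans hd) hΔ 2
  have hθ_le := eigenvalue_le_of_step_le (hUH v) heig1 heig2 hθ ht hd hΔ2
  have hshifted : -θ * ‖w‖ ^ 2 ≤ ⟪Hf xk w, w⟫ := by simpa using hmin w 0
  have hxy : xk + t⁻¹ • v ≠ xk := by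
    simpa using smul_ne_zero (inv_ne_zero ht) (eigvec_ne_zero heig2 hθ ht)
  have hlip_step := hlip (xk + t⁻¹ • v) xk
  have hM := nonneg_of_norm_sub_le_mul_norm hlip_step hxy
  rw [add_sub_cancel_left] at hlip_step
  have hpert := ContinuousLinearMap.inner_apply_self_sub_le_of_norm_sub_le
    (hlip_step.trans (mul_le_mul_of_nonneg_left hd hM)) w
  have hθw := mul_le_mul_of_nonneg_right hθ_le (sq_nonneg ‖w‖)
  linarith

/-- Small-step case: the Hessian at the next iterate `x_{k+1} = x_k + d` is
nearly positive semidefinite. -/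
theorem next_iterate_hessian_bound {n : ℕ}
    (f : EuclideanSpace ℝ (Fin n) → ℝ)
    (gf : EuclideanSpace ℝ (Fin n) → EuclideanSpace ℝ (Fin n))
    (Hf : EuclideanSpace ℝ (Fin n) → EuclideanSpace ℝ (Fin n) →L[ℝ] EuclideanSpace ℝ (Fin n))
    (M U_H δ θ Δ : ℝ)
    (hgrad : ∀ x, HasGradientAt f (gf x) x)
    (hhess : ∀ x, HasFDerivAt gf (Hf x) x)
    (hlip : ∀ x y, ‖Hf x - Hf y‖ ≤ M * ‖x - y‖)
    (xk : EuclideanSpace ℝ (Fin n))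
    (hUH : ∀ w, (inner ℝ (Hf xk w) w : ℝ) ≤ U_H * ‖w‖ ^ 2)
    (hgk : gf xk ≠ 0) (hδ : 0 ≤ δ) (hθ : δ < θ)
    (v : EuclideanSpace ℝ (Fin n)) (t : ℝ) (ht : t ≠ 0)
    (hunit : ‖v‖ ^ 2 + t ^ 2 = 1)
    (heig1 : Hf xk v + t • gf xk = (-θ) • v)
    (heig2 : (inner ℝ (gf xk) v : ℝ) - δ * t = -θ * t)
    (hmin : ∀ (w : EuclideanSpace ℝ (Fin n)) (s : ℝ),
      (-θ) * (‖w‖ ^ 2 + s ^ 2) ≤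
        (inner ℝ (Hf xk w) w : ℝ) + 2 * s * (inner ℝ (gf xk) w : ℝ) - δ * s ^ 2)
    (hd : ‖t⁻¹ • v‖ ≤ Δ) (hΔ : Δ ≤ Real.sqrt 2 / 2) :
    ∀ w : EuclideanSpace ℝ (Fin n),
      -(2 * (U_H + δ) * Δ ^ 2 + M * Δ + δ) * ‖w‖ ^ 2 ≤
        (inner ℝ (Hf (xk + t⁻¹ • v) w) w : ℝ) :=
  next_iterate_hessian_bound_general gf Hf M U_H δ θ Δ hlip xk hUH hθ v t ht heig1 heig2 hmin hd hΔ
end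

section
/- Let f have M-Lipschitz continuous Hessian, and let [v; t] be a unit eigenvector of F = [[H_k, g_k], [g_kᵀ, -δ]] for eigenvalue -θ with θ > δ ≥ 0, where H_k = ∇²f(x_k), g_k = ∇f(x_k), t ≠ 0, and d = v/t with ‖d‖ > Δ > 0. Then with η = Δ/‖d‖, f(x_k + ηd) - f(x_k) ≤ -(Δ²/2)δ + (M/6)Δ³. -/
/-!
Along the segment from `x` to `x + s`, the Lipschitz bound on the Hessian makes the
gradient deviate from its linearization by at most `M/2 ‖s‖² τ²`, and integrating once
more gives the cubic Taylor bound `f(x + s) ≤ f x + ⟪g, s⟫ + ½⟪H s, s⟫ + M/6 ‖s‖³`.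
For the eigenvector direction, `(H + θ) d = -g` and `⟪g, d⟫ = δ - θ ≤ 0`, so the quadratic
model at `s = η d` equals `(η - η²/2) ⟪g, d⟫ - θ/2 Δ²`, which is at most `-δ/2 Δ²`
because `0 < η < 1` and `δ < θ`.
-/

open scoped RealInnerProductSpace

theorem norm_le_of_norm_deriv_le_pow {F : Type*} [NormedAddCommGroup F] [NormedSpace ℝ F]
    {φ φ' : ℝ → F} {C : ℝ} (k : ℕ) (h0 : φ 0 = 0) (hφ : ∀ τ, HasDerivAt φ (φ' τ) τ)
    (hbound : ∀ τ, 0 ≤ τ → ‖φ' τ‖ ≤ C * τ ^ k) {τ : ℝ} (hτ : 0 ≤ τ) :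
    ‖φ τ‖ ≤ C / (k + 1) * τ ^ (k + 1) := by
  have hB : ∀ σ : ℝ, HasDerivAt (fun σ => C / (k + 1) * σ ^ (k + 1)) (C * σ ^ k) σ := by
    intro σ
    refine ((hasDerivAt_pow (k + 1) σ).const_mul (C / (k + 1))).congr_deriv ?_
    push_cast
    field_simp
  exact image_norm_le_of_norm_deriv_right_le_deriv_boundary
    (fun σ _ => (hφ σ).continuousAt.continuousWithinAt) (fun σ _ => (hφ σ).hasDerivWithinAt)
    (by simp [h0]) hB (fun σ hσ => hbound σ hσ.1) ⟨hτ, le_rfl⟩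

section LipschitzHessian

variable {E : Type*} [NormedAddCommGroup E] [InnerProductSpace ℝ E]
  {f : E → ℝ} {gf : E → E} {Hf : E → E →L[ℝ] E} {M : ℝ}

theorem hasDerivAt_const_add_smul (x s : E) (τ : ℝ) :
    HasDerivAt (fun τ : ℝ => x + τ • s) s τ := by
  simpa using ((hasDerivAt_id τ).smul_const s).const_add x

theorem norm_gradient_sub_linearization_le (hhess : ∀ x, HasFDerivAt gf (Hf x) x)
    (hlip : ∀ x y, ‖Hf x - Hf y‖ ≤ M * ‖x - y‖) (x s : E) {τ : ℝ} (hτ : 0 ≤ τ) :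
    ‖gf (x + τ • s) - gf x - τ • Hf x s‖ ≤ M / 2 * ‖s‖ ^ 2 * τ ^ 2 := by
  have hderiv : ∀ σ : ℝ, HasDerivAt (fun σ : ℝ => gf (x + σ • s) - gf x - σ • Hf x s)
      (Hf (x + σ • s) s - Hf x s) σ := fun σ =>
    (((hhess _).comp_hasDerivAt σ (hasDerivAt_const_add_smul x s σ)).sub_const _).sub
      (by simpa using (hasDerivAt_id σ).smul_const (Hf x s))
  have hbound : ∀ σ : ℝ, 0 ≤ σ → ‖Hf (x + σ • s) s - Hf x s‖ ≤ M * ‖s‖ ^ 2 * σ ^ 1 := by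
    intro σ hσ
    calc ‖Hf (x + σ • s) s - Hf x s‖ ≤ ‖Hf (x + σ • s) - Hf x‖ * ‖s‖ :=
          (Hf (x + σ • s) - Hf x).le_opNorm s
      _ ≤ M * ‖(x + σ • s) - x‖ * ‖s‖ := by gcongr; exact hlip _ _
      _ = M * ‖s‖ ^ 2 * σ ^ 1 := by
          rw [add_sub_cancel_left, norm_smul, Real.norm_of_nonneg hσ]; ring
  have := norm_le_of_norm_deriv_le_pow 1 (by simp) hderiv hbound hτ
  norm_num at this ⊢
  linarith

variable [CompleteSpace E]

theorem taylor_upper_bound_of_lipschitz_hessian (hgrad : ∀ x, HasGradientAt f (gf x) x)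
    (hhess : ∀ x, HasFDerivAt gf (Hf x) x) (hlip : ∀ x y, ‖Hf x - Hf y‖ ≤ M * ‖x - y‖)
    (x s : E) :
    f (x + s) - f x - ⟪gf x, s⟫ - 1 / 2 * ⟪Hf x s, s⟫ ≤ M / 6 * ‖s‖ ^ 3 := by
  have hderiv : ∀ τ : ℝ, HasDerivAt
      (fun τ : ℝ => f (x + τ • s) - f x - τ * ⟪gf x, s⟫ - τ ^ 2 / 2 * ⟪Hf x s, s⟫)
      ⟪gf (x + τ • s) - gf x - τ • Hf x s, s⟫ τ := by
    intro τ
    have hf : HasDerivAt (fun τ : ℝ => f (x + τ • s)) ⟪gf (x + τ • s), s⟫ τ := by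
      have := (hgrad _).hasFDerivAt.comp_hasDerivAt τ (hasDerivAt_const_add_smul x s τ)
      simp only [InnerProductSpace.toDual_apply_apply] at this
      exact this
    have hquad : HasDerivAt (fun τ : ℝ => τ ^ 2 / 2 * ⟪Hf x s, s⟫) (τ * ⟪Hf x s, s⟫) τ :=
      (((hasDerivAt_pow 2 τ).div_const 2).mul_const _).congr_deriv (by ring)
    refine (((hf.sub_const _).sub ((hasDerivAt_id τ).mul_const _)).sub hquad).congr_deriv ?_
    simp only [inner_sub_left, real_inner_smul_left, one_mul]
  have hbound : ∀ τ : ℝ, 0 ≤ τ →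
      ‖⟪gf (x + τ • s) - gf x - τ • Hf x s, s⟫‖ ≤ M / 2 * ‖s‖ ^ 3 * τ ^ 2 := by
    intro τ hτ
    calc ‖⟪gf (x + τ • s) - gf x - τ • Hf x s, s⟫‖
        ≤ ‖gf (x + τ • s) - gf x - τ • Hf x s‖ * ‖s‖ := norm_inner_le_norm _ _
      _ ≤ M / 2 * ‖s‖ ^ 2 * τ ^ 2 * ‖s‖ := by
          gcongr; exact norm_gradient_sub_linearization_le hhess hlip x s hτ
      _ = M / 2 * ‖s‖ ^ 3 * τ ^ 2 := by ring
  have := (le_abs_self _).trans (norm_le_of_norm_deriv_le_pow 2 (by simp) hderiv hbound zero_le_one)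
  norm_num at this ⊢
  linarith

end LipschitzHessian

section EigenDirection

variable {E : Type*} [NormedAddCommGroup E] [InnerProductSpace ℝ E]
  {H : E →L[ℝ] E} {g v d : E} {δ θ t : ℝ}

theorem inner_eq_of_augmented_eigenvector (ht : t ≠ 0)
    (heig : ⟪g, v⟫ - δ * t = -θ * t) (hd : d = t⁻¹ • v) : ⟪g, d⟫ = δ - θ := by
  rw [hd, real_inner_smul_right]
  field_simp
  linarith

theorem apply_eq_of_augmented_eigenvector (ht : t ≠ 0)
    (heig : H v + t • g = (-θ) • v) (hd : d = t⁻¹ • v) : H d = (-θ) • d - g := by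
  rw [hd, map_smul, eq_sub_of_add_eq heig]
  match_scalars <;> field_simp

theorem quadratic_model_eq (hHd : H d = (-θ) • d - g) (η : ℝ) :
    ⟪g, η • d⟫ + 1 / 2 * ⟪H (η • d), η • d⟫ = (η - η ^ 2 / 2) * ⟪g, d⟫ - θ / 2 * ‖η • d‖ ^ 2 := by
  simp only [map_smul, hHd, real_inner_smul_left, real_inner_smul_right, inner_sub_left,
    real_inner_self_eq_norm_sq, norm_smul, Real.norm_eq_abs, mul_pow, sq_abs]
  ring

end EigenDirection

theorem large_step_decrease_general {n : ℕ}
    (f : EuclideanSpace ℝ (Fin n) → ℝ)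
    (gf : EuclideanSpace ℝ (Fin n) → EuclideanSpace ℝ (Fin n))
    (Hf : EuclideanSpace ℝ (Fin n) → EuclideanSpace ℝ (Fin n) →L[ℝ] EuclideanSpace ℝ (Fin n))
    (M δ θ Δ : ℝ)
    (hgrad : ∀ x, HasGradientAt f (gf x) x)
    (hhess : ∀ x, HasFDerivAt gf (Hf x) x)
    (hlip : ∀ x y, ‖Hf x - Hf y‖ ≤ M * ‖x - y‖)
    (xk : EuclideanSpace ℝ (Fin n))
    (hθ : δ < θ)
    (v : EuclideanSpace ℝ (Fin n)) (t : ℝ) (ht : t ≠ 0)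
    (heig1 : Hf xk v + t • gf xk = (-θ) • v)
    (heig2 : (inner ℝ (gf xk) v : ℝ) - δ * t = -θ * t)
    (d : EuclideanSpace ℝ (Fin n)) (hdd : d = t⁻¹ • v)
    (hΔ0 : 0 < Δ) (hΔd : Δ < ‖d‖) :
    f (xk + (Δ / ‖d‖) • d) - f xk ≤ -(Δ ^ 2 / 2) * δ + M / 6 * Δ ^ 3 := by
  have hd : 0 < ‖d‖ := hΔ0.trans hΔd
  set η := Δ / ‖d‖
  have hη0 : 0 < η := div_pos hΔ0 hd
  have hη1 : η < 1 := (div_lt_one hd).mpr hΔd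
  have hstep : ‖η • d‖ = Δ := by
    rw [norm_smul, Real.norm_of_nonneg hη0.le, div_mul_cancel₀ _ hd.ne']
  have hgd := inner_eq_of_augmented_eigenvector ht heig2 hdd
  have hmodel := quadratic_model_eq (apply_eq_of_augmented_eigenvector ht heig1 hdd) η
  have htaylor := taylor_upper_bound_of_lipschitz_hessian hgrad hhess hlip xk (η • d)
  rw [hgd, hstep] at hmodel
  rw [hstep] at htaylor
  have hdescent : (η - η ^ 2 / 2) * (δ - θ) ≤ 0 :=
    mul_nonpos_of_nonneg_of_nonpos (by nlinarith) (by linarith)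
  have hcurv : δ * Δ ^ 2 ≤ θ * Δ ^ 2 := mul_le_mul_of_nonneg_right hθ.le (sq_nonneg Δ)
  linarith

/-- Sufficient decrease in the large-value case `t ≠ 0`, `‖d‖ > Δ` with the
direction `d = v / t` and stepsize `η = Δ / ‖d‖`. -/
theorem large_step_decrease {n : ℕ}
    (f : EuclideanSpace ℝ (Fin n) → ℝ)
    (gf : EuclideanSpace ℝ (Fin n) → EuclideanSpace ℝ (Fin n))
    (Hf : EuclideanSpace ℝ (Fin n) → EuclideanSpace ℝ (Fin n) →L[ℝ] EuclideanSpace ℝ (Fin n))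
    (M δ θ Δ : ℝ)
    (hgrad : ∀ x, HasGradientAt f (gf x) x)
    (hhess : ∀ x, HasFDerivAt gf (Hf x) x)
    (hlip : ∀ x y, ‖Hf x - Hf y‖ ≤ M * ‖x - y‖)
    (xk : EuclideanSpace ℝ (Fin n))
    (hδ : 0 ≤ δ) (hθ : δ < θ)
    (v : EuclideanSpace ℝ (Fin n)) (t : ℝ) (ht : t ≠ 0)
    (hunit : ‖v‖ ^ 2 + t ^ 2 = 1)
    (heig1 : Hf xk v + t • gf xk = (-θ) • v)
    (heig2 : (inner ℝ (gf xk) v : ℝ) - δ * t = -θ * t)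
    (d : EuclideanSpace ℝ (Fin n)) (hdd : d = t⁻¹ • v)
    (hΔ0 : 0 < Δ) (hΔd : Δ < ‖d‖) :
    f (xk + (Δ / ‖d‖) • d) - f xk ≤ -(Δ ^ 2 / 2) * δ + M / 6 * Δ ^ 3 :=
  large_step_decrease_general f gf Hf M δ θ Δ hgrad hhess hlip xk hθ v t ht heig1 heig2 d hdd hΔ0
    hΔd
end

section
/- Let H be a symmetric n×n matrix, g ∈ ℝ^n with ‖g‖ ≤ U_g, ‖H‖ ≤ U_H, δ > 0, and suppose λ_min(H) + δ ≥ c > 0. Then the homogenized matrix F = [[H, g], [gᵀ, -δ]] has spectral gap λ₂(F) - λ_min(F) ≥ λ_min(H) + δ ≥ c. -/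
/-!
Testing `F` on the last basis vector gives `λ_min(F) ≤ F_{n+1,n+1} = -δ`. On the hyperplane
`x_{n+1} = 0` the quadratic form of `F` is that of `H`, hence at least `λ_min(H) ‖x‖²`. The span
of two orthonormal eigenvectors of `F` meets this hyperplane, so of any two eigenvalues of `F` the
larger is at least `λ_min(H)` (Cauchy interlacing); in particular every eigenvalue other than a
smallest one is.
-/

open Matrix

namespace Matrix.IsHermitian

variable {m : Type*} [Fintype m] [DecidableEq m] {A : Matrix m m ℝ}

open scoped MatrixOrder in
theorem iInf_eigenvalues_mul_dotProduct_le (hA : A.IsHermitian) (x : m → ℝ) :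
    (⨅ i, hA.eigenvalues i) * (x ⬝ᵥ x) ≤ x ⬝ᵥ (A *ᵥ x) := by
  have hle : algebraMap ℝ _ (⨅ i, hA.eigenvalues i) ≤ A := by
    rw [algebraMap_le_iff_le_spectrum (a := A) hA.isSelfAdjoint,
      hA.spectrum_real_eq_range_eigenvalues]
    rintro _ ⟨i, rfl⟩
    exact ciInf_le (Finite.bddBelow_range _) i
  simpa [sub_mulVec, Algebra.algebraMap_eq_smul_one, smul_mulVec, dotProduct_smul] using
    (Matrix.le_iff.mp hle).dotProduct_mulVec_nonneg x

theorem iInf_eigenvalues_le_apply_self (hA : A.IsHermitian) (k : m) :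
    ⨅ i, hA.eigenvalues i ≤ A k k := by
  simpa using hA.iInf_eigenvalues_mul_dotProduct_le (Pi.single k 1)

theorem dotProduct_eigenvectorBasis (hA : A.IsHermitian) (i j : m) :
    ⇑(hA.eigenvectorBasis i) ⬝ᵥ ⇑(hA.eigenvectorBasis j) = if i = j then 1 else 0 := by
  have := orthonormal_iff_ite.mp hA.eigenvectorBasis.orthonormal i j
  rw [EuclideanSpace.inner_eq_star_dotProduct] at this
  simpa [dotProduct_comm] using this

theorem le_max_eigenvalues_of_ge_on_hyperplane (hA : A.IsHermitian) (φ : (m → ℝ) →ₗ[ℝ] ℝ)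
    {Λ : ℝ} (hφ : ∀ x, φ x = 0 → Λ * (x ⬝ᵥ x) ≤ x ⬝ᵥ (A *ᵥ x)) {i j : m} (hij : i ≠ j) :
    Λ ≤ max (hA.eigenvalues i) (hA.eigenvalues j) := by
  set v := ⇑(hA.eigenvectorBasis i)
  set w := ⇑(hA.eigenvectorBasis j)
  obtain ⟨a, b, hab, hφx⟩ : ∃ a b : ℝ, 0 < a ^ 2 + b ^ 2 ∧ φ (a • v + b • w) = 0 := by
    by_cases hw : φ w = 0
    · exact ⟨0, 1, by norm_num, by simp [hw]⟩
    · exact ⟨φ w, -φ v, by positivity, by simp only [map_add, map_smul, smul_eq_mul]; ring⟩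
  have hquad : (a • v + b • w) ⬝ᵥ (A *ᵥ (a • v + b • w)) =
      a ^ 2 * hA.eigenvalues i + b ^ 2 * hA.eigenvalues j := by
    simp only [v, w, mulVec_add, mulVec_smul, mulVec_eigenvectorBasis, add_dotProduct,
      dotProduct_add, smul_dotProduct, dotProduct_smul, dotProduct_eigenvectorBasis, hij,
      hij.symm, if_true, if_false, smul_eq_mul]
    ring
  have hnorm : (a • v + b • w) ⬝ᵥ (a • v + b • w) = a ^ 2 + b ^ 2 := by
    simp only [v, w, add_dotProduct, dotProduct_add, smul_dotProduct, dotProduct_smul,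
      dotProduct_eigenvectorBasis, hij, hij.symm, if_true, if_false, smul_eq_mul]
    ring
  have hΛ := hφ _ hφx
  rw [hquad, hnorm] at hΛ
  refine le_of_mul_le_mul_right (hΛ.trans ?_) hab
  nlinarith [le_max_left (hA.eigenvalues i) (hA.eigenvalues j),
    le_max_right (hA.eigenvalues i) (hA.eigenvalues j), sq_nonneg a, sq_nonneg b]

end Matrix.IsHermitian

section homog

variable {n : ℕ} (H : Matrix (Fin n) (Fin n) ℝ) (g : Fin n → ℝ) (δ : ℝ)

@[simp]
theorem homog_last_last : homog H g δ (Fin.last n) (Fin.last n) = -δ := by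
  simp [homog]

theorem dotProduct_homog_mulVec_of_last_eq_zero {x : Fin (n + 1) → ℝ} (hx : x (Fin.last n) = 0) :
    x ⬝ᵥ (homog H g δ *ᵥ x) = (x ∘ Fin.castSucc) ⬝ᵥ (H *ᵥ (x ∘ Fin.castSucc)) := by
  simp [dotProduct, mulVec, Fin.sum_univ_castSucc, hx, homog]

theorem dotProduct_self_of_last_eq_zero {x : Fin (n + 1) → ℝ} (hx : x (Fin.last n) = 0) :
    x ⬝ᵥ x = (x ∘ Fin.castSucc) ⬝ᵥ (x ∘ Fin.castSucc) := by
  simp [dotProduct, Fin.sum_univ_castSucc, hx]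

end homog

theorem iInf_eigenvalues_mul_dotProduct_le_homog {n : ℕ} {H : Matrix (Fin n) (Fin n) ℝ}
    (hH : H.IsHermitian) (g : Fin n → ℝ) (δ : ℝ) {x : Fin (n + 1) → ℝ}
    (hx : x (Fin.last n) = 0) :
    (⨅ i, hH.eigenvalues i) * (x ⬝ᵥ x) ≤ x ⬝ᵥ (homog H g δ *ᵥ x) := by
  rw [dotProduct_homog_mulVec_of_last_eq_zero H g δ hx, dotProduct_self_of_last_eq_zero hx]
  exact hH.iInf_eigenvalues_mul_dotProduct_le _

theorem homog_spectral_gap_general {n : ℕ}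
    (H : Matrix (Fin n) (Fin n) ℝ) (hH : H.IsHermitian)
    (g : Fin n → ℝ) (δ c : ℝ)
    (hF : (homog H g δ).IsHermitian)
    (hcgap : c ≤ (⨅ i, hH.eigenvalues i) + δ) :
    ∃ i₀ : Fin (n + 1), (∀ i, hF.eigenvalues i₀ ≤ hF.eigenvalues i) ∧
      (∀ i, i ≠ i₀ → (⨅ j, hH.eigenvalues j) + δ ≤ hF.eigenvalues i - hF.eigenvalues i₀) ∧
      c ≤ (⨅ j, hH.eigenvalues j) + δ := by
  obtain ⟨i₀, hi₀⟩ := Finite.exists_min hF.eigenvalues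
  refine ⟨i₀, hi₀, fun i hi => ?_, hcgap⟩
  have hbottom : hF.eigenvalues i₀ ≤ -δ :=
    calc hF.eigenvalues i₀ ≤ ⨅ j, hF.eigenvalues j := le_ciInf hi₀
      _ ≤ homog H g δ (Fin.last n) (Fin.last n) := hF.iInf_eigenvalues_le_apply_self _
      _ = -δ := homog_last_last H g δ
  have hsecond : ⨅ j, hH.eigenvalues j ≤ hF.eigenvalues i := by
    simpa [max_eq_left (hi₀ i)] using
      hF.le_max_eigenvalues_of_ge_on_hyperplane (LinearMap.proj (Fin.last n))
        (fun _ hx => iInf_eigenvalues_mul_dotProduct_le_homog hH g δ hx) hi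
  linarith

/-- If `λ_min(H) + δ ≥ c > 0`, the homogenized matrix has spectral gap
`λ₂(F) - λ_min(F) ≥ λ_min(H) + δ ≥ c`. -/
theorem homog_spectral_gap {n : ℕ}
    (H : Matrix (Fin n) (Fin n) ℝ) (hH : H.IsHermitian)
    (g : Fin n → ℝ) (U_g U_H δ c : ℝ)
    (hg : Real.sqrt (g ⬝ᵥ g) ≤ U_g)
    (hHnorm : ‖Matrix.toEuclideanCLM (𝕜 := ℝ) H‖ ≤ U_H)
    (hδ : 0 < δ) (hc : 0 < c)
    (hF : (homog H g δ).IsHermitian)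
    (hcgap : c ≤ (⨅ i, hH.eigenvalues i) + δ) :
    ∃ i₀ : Fin (n + 1), (∀ i, hF.eigenvalues i₀ ≤ hF.eigenvalues i) ∧
      (∀ i, i ≠ i₀ → (⨅ j, hH.eigenvalues j) + δ ≤ hF.eigenvalues i - hF.eigenvalues i₀) ∧
      c ≤ (⨅ j, hH.eigenvalues j) + δ :=
  homog_spectral_gap_general H hH g δ c hF hcgap
end
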